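/- Let ρ = 2 − √2 and n ≥ 2. Consider the preference profile V over 3 projects in which ⌊nρ⌋ voters propose (1,0,0) and ⌈n(1−ρ)⌉ voters propose x = (√2 − 1, 1 − √2/2, 1 − √2/2). Then the Independent Markets mechanism outputs exactly x on V (a feasible phantom parameter is t* = √2/(2n)). -/

import Mathlib

open Finset

/-- A division among `m` projects: coordinates in `[0,1]` summing to `1`. -/
def IsDivision {m : ℕ} (x : Fin m → ℝ) : Prop :=
  (∀ j, 0 ≤ x j ∧ x j ≤ 1) ∧ ∑ j, x j = 1

/-- The ℓ1 distance between two vectors over `Fin m`. -/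
noncomputable def l1 {m : ℕ} (x y : Fin m → ℝ) : ℝ := ∑ j, |x j - y j|

/-- The proportional division (coordinatewise mean) of a profile. -/
noncomputable def propDiv {n m : ℕ} (V : Fin n → Fin m → ℝ) : Fin m → ℝ :=
  fun j => (∑ i, V i j) / (n : ℝ)

/-- The `(k+1)`-th smallest element of a multiset of reals. -/
noncomputable def medianAt (s : Multiset ℝ) (k : ℕ) : ℝ :=
  (s.sort (· ≤ ·)).getD k 0

/-- Voter reports on project `j` together with the `n+1` phantom values `p 0, …, p n`. -/
noncomputable def projValues {n m : ℕ} (V : Fin n → Fin m → ℝ)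
    (p : ℕ → ℝ) (j : Fin m) : Multiset ℝ :=
  (Multiset.map (fun i => V i j) Finset.univ.val) +
    (Multiset.map p (Finset.range (n + 1)).val)

/-- The median (the `(n+1)`-th smallest of the `2n+1` values) of the `n` voter reports
on project `j` together with the `n+1` phantom values. -/
noncomputable def phantomMedian {n m : ℕ} (V : Fin n → Fin m → ℝ)
    (p : ℕ → ℝ) (j : Fin m) : ℝ :=
  medianAt (projValues V p j) n

/-- A phantom system for `n` voters: continuous, weakly increasing functions
`y k : [0,1] → [0,1]`, `k = 0, …, n`, with `y k 0 = 0`, `y k 1 = 1`,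
pointwise ordered in `k`. -/
structure PhantomSystem (n : ℕ) where
  y : ℕ → ℝ → ℝ
  contOn : ∀ k ≤ n, ContinuousOn (y k) (Set.Icc 0 1)
  monoOn : ∀ k ≤ n, MonotoneOn (y k) (Set.Icc 0 1)
  mem_Icc : ∀ k ≤ n, ∀ t ∈ Set.Icc (0:ℝ) 1, y k t ∈ Set.Icc (0:ℝ) 1
  map_zero : ∀ k ≤ n, y k 0 = 0
  map_one : ∀ k ≤ n, y k 1 = 1
  mono_idx : ∀ t ∈ Set.Icc (0:ℝ) 1, ∀ k k', k ≤ k' → k' ≤ n → y k t ≤ y k' t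

/-- `f` is the moving phantom mechanism associated with the phantom system `Y`:
on each profile of divisions, for some `t*` making the medians sum to `1`,
it outputs on each project the median of the voter reports and the phantom values. -/
def IsMovingPhantom {n m : ℕ} (f : (Fin n → Fin m → ℝ) → (Fin m → ℝ))
    (Y : PhantomSystem n) : Prop :=
  ∀ V : Fin n → Fin m → ℝ, (∀ i, IsDivision (V i)) →
    ∃ t ∈ Set.Icc (0:ℝ) 1,
      (∑ j, phantomMedian V (fun k => Y.y k t) j) = 1 ∧
      ∀ j, f V j = phantomMedian V (fun k => Y.y k t) j

/-- Truthfulness of a budget aggregation mechanism: no voter `i` with true peak `V i`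
can get an outcome closer (in ℓ1 distance) to her peak by reporting some division `v`
instead of `V i`. -/
def Truthful {n m : ℕ} (f : (Fin n → Fin m → ℝ) → (Fin m → ℝ)) : Prop :=
  ∀ V : Fin n → Fin m → ℝ, (∀ i, IsDivision (V i)) →
    ∀ i : Fin n, ∀ v : Fin m → ℝ, IsDivision v →
      l1 (f V) (V i) ≤ l1 (f (Function.update V i v)) (V i)

/-- The ℓ1-loss of mechanism `f` on profile `V`. -/
noncomputable def loss {n m : ℕ} (f : (Fin n → Fin m → ℝ) → (Fin m → ℝ))
    (V : Fin n → Fin m → ℝ) : ℝ :=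
  l1 (f V) (propDiv V)

/-- The phantom system of the Piecewise Uniform mechanism for `n` voters. -/
noncomputable def puPhantom (n : ℕ) (k : ℕ) (t : ℝ) : ℝ :=
  if t < 1 / 2 then
    (if (k : ℝ) / (n : ℝ) < 1 / 2 then 0 else 4 * t * (k : ℝ) / (n : ℝ) - 2 * t)
  else
    (if (k : ℝ) / (n : ℝ) < 1 / 2 then (k : ℝ) * (2 * t - 1) / (n : ℝ)
     else (k : ℝ) * (3 - 2 * t) / (n : ℝ) - 2 + 2 * t)

/-- `w` is an output of the Piecewise Uniform mechanism on profile `V`. -/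
def IsPUOutcome {n m : ℕ} (V : Fin n → Fin m → ℝ) (w : Fin m → ℝ) : Prop :=
  ∃ t ∈ Set.Icc (0:ℝ) 1,
    (∑ j, phantomMedian V (fun k => puPhantom n k t) j) = 1 ∧
    ∀ j, w j = phantomMedian V (fun k => puPhantom n k t) j

/-- `w` is an output of the Independent Markets mechanism (phantoms `min (k·t) 1`)
on profile `V`. -/
def IsIMOutcome {n m : ℕ} (V : Fin n → Fin m → ℝ) (w : Fin m → ℝ) : Prop :=
  ∃ t : ℝ, 0 ≤ t ∧
    (∑ j, phantomMedian V (fun k => min ((k : ℝ) * t) 1) j) = 1 ∧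
    ∀ j, w j = phantomMedian V (fun k => min ((k : ℝ) * t) 1) j

/-- A single-minded division: it assigns the whole budget to one project. -/
def SingleMindedDiv {m : ℕ} (v : Fin m → ℝ) : Prop := ∃ j, v j = 1

/-- A double-minded division relative to an outcome `w` (three projects): it agrees with
`w` on one project `j`, proposes `1 - w j` on another project, and `0` on the third. -/
def DoubleMindedDiv (w v : Fin 3 → ℝ) : Prop :=
  ∃ j j' : Fin 3, j ≠ j' ∧ v j = w j ∧ v j' = 1 - w j ∧
    ∀ k, k ≠ j → k ≠ j' → v k = 0

/-- A three-type profile for mechanism `f`: each voter is fully-satisfied,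
double-minded, or single-minded. -/
def ThreeTypeProfile {n : ℕ} (f : (Fin n → Fin 3 → ℝ) → (Fin 3 → ℝ))
    (V : Fin n → Fin 3 → ℝ) : Prop :=
  ∀ i, V i = f V ∨ DoubleMindedDiv (f V) (V i) ∨ SingleMindedDiv (V i)

/-- The single-minded division fully supporting project `j`. -/
noncomputable def singleDiv (j : Fin 3) : Fin 3 → ℝ :=
  fun j' => if j' = j then 1 else 0

/-- The double-minded division proposing `x k` on project `k`, `1 - x k` on
project `j` and `0` on the remaining project. -/
noncomputable def doubleDiv (x : Fin 3 → ℝ) (k j : Fin 3) : Fin 3 → ℝ :=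
  fun j' => if j' = k then x k else if j' = j then 1 - x k else 0

/-- A utilitarian mechanism: it always returns a division minimizing the total
ℓ1 distance (social cost) to the voters' proposals. -/
def Utilitarian {n m : ℕ} (f : (Fin n → Fin m → ℝ) → (Fin m → ℝ)) : Prop :=
  ∀ V : Fin n → Fin m → ℝ, (∀ i, IsDivision (V i)) →
    IsDivision (f V) ∧
    ∀ x : Fin m → ℝ, IsDivision x → (∑ i, l1 (V i) (f V)) ≤ ∑ i, l1 (V i) x

/-- The lower-bound profile for the Independent Markets mechanism: with
`ρ = 2 - √2`, `⌊nρ⌋` voters propose `(1,0,0)` and the remaining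
`⌈n(1-ρ)⌉` voters propose `(√2 - 1, 1 - √2/2, 1 - √2/2)`. -/
noncomputable def imProfile (n : ℕ) : Fin n → Fin 3 → ℝ :=
  fun i j =>
    if (i : ℕ) < Nat.floor ((n : ℝ) * (2 - Real.sqrt 2)) then
      (if (j : ℕ) = 0 then 1 else 0)
    else
      (if (j : ℕ) = 0 then Real.sqrt 2 - 1 else 1 - Real.sqrt 2 / 2)

/-! The median of the `2n+1` values on a project equals `a` as soon as at most `n` of them lie
below `a` and more than `n` lie at or below `a`. With `t = √2/(2n)` the phantom `k t` is at most
`√2 - 1` exactly when `k ≤ n(2 - √2)`, and at most `1 - √2/2` exactly when `k ≤ n(√2 - 1)`. These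
two irrational numbers sum to `n`, so their floors sum to `n - 1`, and this is precisely the count
that makes `√2 - 1` the median on the first project and `1 - √2/2` the median on the other two.
Uniqueness holds for every profile: the medians are monotone in `t`, so two parameters whose
medians both sum to `1` produce the same medians. -/

theorem List.SortedLE.pred_getElem_iff_lt_countP {α : Type*} [Preorder α] {l : List α}
    (hl : l.SortedLE) {p : α → Prop} [DecidablePred p] (hp : ∀ ⦃x y⦄, x ≤ y → p y → p x)
    {n : ℕ} (hn : n < l.length) : p l[n] ↔ n < l.countP p := by
  have hsplit : ∀ m, l.countP p = (l.take m).countP p + (l.drop m).countP p := fun m => by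
    rw [← List.countP_append, List.take_append_drop]
  constructor
  · intro hpn
    have htake : (l.take (n + 1)).countP p = n + 1 := by
      rw [List.countP_eq_length.2, List.length_take]
      · omega
      · intro x hx
        obtain ⟨i, hi, rfl⟩ := List.mem_iff_getElem.1 hx
        rw [List.length_take] at hi
        simpa using hp (hl.getElem_le_getElem_of_le (by omega : i ≤ n)) hpn
    rw [hsplit (n + 1)]
    omega
  · intro hcount
    by_contra hpn
    have hdrop : (l.drop n).countP p = 0 := by
      rw [List.countP_eq_zero]
      intro x hx
      obtain ⟨i, hi, rfl⟩ := List.mem_iff_getElem.1 hx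
      simpa using fun h => hpn (hp (hl.getElem_le_getElem_of_le (Nat.le_add_right n i)) h)
    have := (l.take n).countP_le_length (p := p)
    rw [hsplit n, hdrop] at hcount
    rw [List.length_take] at this
    omega

theorem pred_medianAt_iff_lt_countP {s : Multiset ℝ} {p : ℝ → Prop} [DecidablePred p]
    (hp : ∀ ⦃x y⦄, x ≤ y → p y → p x) {n : ℕ} (hn : n < Multiset.card s) :
    p (medianAt s n) ↔ n < s.countP p := by
  have hlen : n < (s.sort (· ≤ ·)).length := by rwa [Multiset.length_sort]
  rw [medianAt, List.getD_eq_getElem _ _ hlen,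
    (Multiset.pairwise_sort s _).sortedLE.pred_getElem_iff_lt_countP hp hlen,
    ← Multiset.coe_countP, Multiset.sort_eq]

theorem medianAt_le_iff {s : Multiset ℝ} {n : ℕ} (hn : n < Multiset.card s) {a : ℝ} :
    medianAt s n ≤ a ↔ n < s.countP (· ≤ a) :=
  pred_medianAt_iff_lt_countP (fun _ _ hxy hy => hxy.trans hy) hn

theorem medianAt_lt_iff {s : Multiset ℝ} {n : ℕ} (hn : n < Multiset.card s) {a : ℝ} :
    medianAt s n < a ↔ n < s.countP (· < a) :=
  pred_medianAt_iff_lt_countP (fun _ _ hxy hy => hxy.trans_lt hy) hn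

theorem medianAt_eq_of_countP {s : Multiset ℝ} {n : ℕ} {a : ℝ}
    (hlt : s.countP (· < a) ≤ n) (hle : n < s.countP (· ≤ a)) : medianAt s n = a := by
  have hn : n < Multiset.card s := hle.trans_le (Multiset.countP_le_card _ _)
  exact le_antisymm ((medianAt_le_iff hn).2 hle) (not_lt.1 fun h => by
    have := (medianAt_lt_iff hn).1 h
    omega)

theorem medianAt_le_medianAt {s t : Multiset ℝ} {n : ℕ} (hn : n < Multiset.card t)
    (h : ∀ a, t.countP (· ≤ a) ≤ s.countP (· ≤ a)) : medianAt s n ≤ medianAt t n := by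
  have ht := (medianAt_le_iff hn).1 le_rfl
  exact (medianAt_le_iff ((ht.trans_le (h _)).trans_le (Multiset.countP_le_card _ _))).2
    (ht.trans_le (h _))

section PhantomMedian

variable {n m : ℕ} (V : Fin n → Fin m → ℝ)

theorem countP_projValues (p : ℕ → ℝ) (j : Fin m) (P : ℝ → Prop) [DecidablePred P] :
    (projValues V p j).countP P = #{i | P (V i j)} + #{k ∈ range (n + 1) | P (p k)} := by
  rw [projValues, Multiset.countP_add, Multiset.countP_map, Multiset.countP_map]
  rfl

theorem card_projValues (p : ℕ → ℝ) (j : Fin m) : Multiset.card (projValues V p j) = 2 * n + 1 := by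
  simp only [projValues, Multiset.card_add, Multiset.card_map, card_val, card_univ,
    Fintype.card_fin, card_range]
  ring

theorem phantomMedian_eq_of_card_filter {p : ℕ → ℝ} {j : Fin m} {a : ℝ}
    (hlt : #{i | V i j < a} + #{k ∈ range (n + 1) | p k < a} ≤ n)
    (hle : n < #{i | V i j ≤ a} + #{k ∈ range (n + 1) | p k ≤ a}) :
    phantomMedian V p j = a :=
  medianAt_eq_of_countP (by rwa [countP_projValues]) (by rwa [countP_projValues])

theorem phantomMedian_mono {p q : ℕ → ℝ} (hpq : ∀ k ≤ n, p k ≤ q k) (j : Fin m) :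
    phantomMedian V p j ≤ phantomMedian V q j := by
  refine medianAt_le_medianAt (by rw [card_projValues]; omega) fun a => ?_
  rw [countP_projValues, countP_projValues]
  gcongr with k hk
  exact hpq k (Nat.lt_succ_iff.1 (mem_range.1 hk))

theorem phantomMedian_eq_of_le_of_sum_eq {p q : ℕ → ℝ} (hpq : ∀ k ≤ n, p k ≤ q k)
    (hsum : ∑ j, phantomMedian V p j = ∑ j, phantomMedian V q j) (j : Fin m) :
    phantomMedian V p j = phantomMedian V q j :=
  (sum_eq_sum_iff_of_le fun j _ => phantomMedian_mono V hpq j).1 hsum j (mem_univ j)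

end PhantomMedian

theorem IsIMOutcome.eq_phantomMedian {n m : ℕ} {V : Fin n → Fin m → ℝ} {w : Fin m → ℝ}
    (hw : IsIMOutcome V w) {t : ℝ}
    (hsum : ∑ j, phantomMedian V (fun k => min ((k : ℝ) * t) 1) j = 1) (j : Fin m) :
    w j = phantomMedian V (fun k => min ((k : ℝ) * t) 1) j := by
  obtain ⟨s, -, hs, hw⟩ := hw
  have hmono : ∀ {s t : ℝ}, s ≤ t → ∀ k ≤ n, min ((k : ℝ) * s) 1 ≤ min ((k : ℝ) * t) 1 :=
    fun hst k _ => min_le_min_right 1 (mul_le_mul_of_nonneg_left hst k.cast_nonneg)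
  rw [hw j]
  rcases le_total s t with hst | hts
  · exact phantomMedian_eq_of_le_of_sum_eq V (hmono hst) (hs.trans hsum.symm) j
  · exact (phantomMedian_eq_of_le_of_sum_eq V (hmono hts) (hsum.trans hs.symm) j).symm

theorem Nat.floor_add_floor_add_one_of_add_eq {x y : ℝ} (hx : 0 ≤ x) (hy : 0 ≤ y)
    (hxn : ∀ k : ℕ, x ≠ k) {m : ℕ} (hxy : x + y = m) : ⌊x⌋₊ + ⌊y⌋₊ + 1 = m := by
  have hx' : (⌊x⌋₊ : ℝ) < x := (Nat.floor_le hx).lt_of_ne (hxn _).symm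
  have hy' : (⌊y⌋₊ : ℝ) ≤ y := Nat.floor_le hy
  have hlt : ⌊x⌋₊ + ⌊y⌋₊ < m := by
    exact_mod_cast (by linarith : (⌊x⌋₊ + ⌊y⌋₊ : ℝ) < m)
  have hgt : m < ⌊x⌋₊ + ⌊y⌋₊ + 2 := by
    exact_mod_cast (by linarith [Nat.lt_floor_add_one x, Nat.lt_floor_add_one y] :
      (m : ℝ) < ⌊x⌋₊ + ⌊y⌋₊ + 2)
  omega

theorem card_filter_range_min_mul_le {n : ℕ} {t a : ℝ} (ht : 0 < t) (hnt : n * t ≤ 1)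
    (ha : 0 ≤ a) (hatn : a / t < n + 1) :
    #{k ∈ range (n + 1) | min (((k : ℕ) : ℝ) * t) 1 ≤ a} = ⌊a / t⌋₊ + 1 := by
  rw [← card_range (⌊a / t⌋₊ + 1)]
  congr 1
  ext k
  simp only [mem_filter, mem_range, Nat.lt_succ_iff, Nat.le_floor_iff (div_nonneg ha ht.le),
    le_div_iff₀ ht]
  constructor
  · rintro ⟨hkn, hka⟩
    have hk1 : (k : ℝ) * t ≤ 1 := le_trans (by gcongr) hnt
    rwa [min_eq_left hk1] at hka
  · intro hka
    have hkn : (k : ℝ) < n + 1 := (le_div_iff₀ ht |>.2 hka).trans_lt hatn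
    exact ⟨Nat.lt_succ_iff.1 (by exact_mod_cast hkn), min_le_of_left_le hka⟩

theorem card_filter_fin_ite {α : Type*} {n f : ℕ} (hf : f ≤ n) (P : α → Prop) [DecidablePred P]
    (a b : α) :
    #{i : Fin n | P (if (i : ℕ) < f then a else b)} =
      (if P a then f else 0) + (if P b then n - f else 0) := by
  have hlt : #{i : Fin n | (i : ℕ) < f} = f := by rw [Fin.card_filter_val_lt]; omega
  have hge : #{i : Fin n | f ≤ (i : ℕ)} = n - f := by
    simp_rw [← not_lt]
    rw [filter_not, card_sdiff_of_subset (filter_subset _ _), hlt, card_univ, Fintype.card_fin]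
  by_cases ha : P a <;> by_cases hb : P b <;> simp [apply_ite P, ha, hb, hlt, hge]
  omega

noncomputable def imDivision (j : Fin 3) : ℝ :=
  if (j : ℕ) = 0 then √2 - 1 else 1 - √2 / 2

noncomputable def imPhantoms (n k : ℕ) : ℝ :=
  min ((k : ℝ) * (√2 / (2 * (n : ℝ)))) 1

theorem sum_imDivision : ∑ j, imDivision j = 1 := by
  simp only [imDivision, Fin.sum_univ_three]
  norm_num
  ring

theorem sqrt_two_lt_two : √2 < 2 := (Real.sqrt_lt' two_pos).2 (by norm_num)

theorem floor_mul_two_sub_sqrt_two_add_floor_mul_sqrt_two_sub_one {n : ℕ} (hn : n ≠ 0) :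
    ⌊(n : ℝ) * (2 - √2)⌋₊ + ⌊(n : ℝ) * (√2 - 1)⌋₊ + 1 = n := by
  have hirr : Irrational ((n : ℝ) * (2 - √2)) := by
    simpa using (irrational_sqrt_two.natCast_sub 2).natCast_mul hn
  refine Nat.floor_add_floor_add_one_of_add_eq ?_ ?_ hirr.ne_nat (by ring)
  · exact mul_nonneg n.cast_nonneg (by linarith [sqrt_two_lt_two])
  · exact mul_nonneg n.cast_nonneg (by linarith [Real.one_lt_sqrt_two])

theorem card_filter_imPhantoms_le {n : ℕ} (hn : n ≠ 0) {c : ℝ} (hc : 0 ≤ c)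
    (hcn : n * c < n + 1) :
    #{k ∈ range (n + 1) | imPhantoms n k ≤ c * √2 / 2} = ⌊n * c⌋₊ + 1 := by
  have hn' : (0 : ℝ) < n := by positivity
  have hdiv : c * √2 / 2 / (√2 / (2 * n)) = n * c := by field_simp
  have ht : 0 < √2 / (2 * n) := by positivity
  have hnt : n * (√2 / (2 * n)) ≤ 1 := by
    rw [show (n : ℝ) * (√2 / (2 * n)) = √2 / 2 by field_simp]
    linarith [sqrt_two_lt_two]
  have := card_filter_range_min_mul_le (a := c * √2 / 2) ht hnt (by positivity) (by rwa [hdiv])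
  rwa [hdiv] at this

theorem card_filter_imProfile {n : ℕ} (j : Fin 3) (P : ℝ → Prop) [DecidablePred P] :
    #{i | P (imProfile n i j)} =
      (if P (if (j : ℕ) = 0 then 1 else 0) then ⌊(n : ℝ) * (2 - √2)⌋₊ else 0) +
        (if P (imDivision j) then n - ⌊(n : ℝ) * (2 - √2)⌋₊ else 0) :=
  card_filter_fin_ite (Nat.floor_le_of_le (by nlinarith [Real.one_lt_sqrt_two])) P _ _

theorem card_filter_imPhantoms_lt_le {n : ℕ} (a : ℝ) :
    #{k ∈ range (n + 1) | imPhantoms n k < a} ≤ #{k ∈ range (n + 1) | imPhantoms n k ≤ a} :=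
  card_le_card (monotone_filter_right _ fun _ _ => le_of_lt)

theorem phantomMedian_imProfile_of_eq_zero {n : ℕ} (hn : n ≠ 0) {j : Fin 3} (hj : (j : ℕ) = 0) :
    phantomMedian (imProfile n) (imPhantoms n) j = √2 - 1 := by
  have hfg := floor_mul_two_sub_sqrt_two_add_floor_mul_sqrt_two_sub_one hn
  have hn' : (1 : ℝ) ≤ n := by exact_mod_cast Nat.one_le_iff_ne_zero.2 hn
  have h2 := sqrt_two_lt_two
  have hsq : √2 * √2 = 2 := Real.mul_self_sqrt zero_le_two
  have hphantoms : #{k ∈ range (n + 1) | imPhantoms n k ≤ √2 - 1} =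
      ⌊(n : ℝ) * (2 - √2)⌋₊ + 1 := by
    rw [show √2 - 1 = (2 - √2) * √2 / 2 by linarith,
      card_filter_imPhantoms_le hn (by linarith) (by nlinarith [Real.one_lt_sqrt_two])]
  have hstrict := card_filter_imPhantoms_lt_le (n := n) (√2 - 1)
  apply phantomMedian_eq_of_card_filter
  · rw [card_filter_imProfile j (· < √2 - 1)]
    simp only [hj, ↓reduceIte, show ¬(1 : ℝ) < √2 - 1 by linarith, imDivision,
      lt_self_iff_false, add_zero, zero_add]
    omega
  · rw [card_filter_imProfile j (· ≤ √2 - 1)]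
    simp only [hj, ↓reduceIte, show ¬(1 : ℝ) ≤ √2 - 1 by linarith, imDivision, le_refl,
      zero_add]
    omega

theorem phantomMedian_imProfile_of_ne_zero {n : ℕ} (hn : n ≠ 0) {j : Fin 3} (hj : (j : ℕ) ≠ 0) :
    phantomMedian (imProfile n) (imPhantoms n) j = 1 - √2 / 2 := by
  have hfg := floor_mul_two_sub_sqrt_two_add_floor_mul_sqrt_two_sub_one hn
  have hn' : (1 : ℝ) ≤ n := by exact_mod_cast Nat.one_le_iff_ne_zero.2 hn
  have h1 := Real.one_lt_sqrt_two
  have h2 := sqrt_two_lt_two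
  have hsq : √2 * √2 = 2 := Real.mul_self_sqrt zero_le_two
  have hphantoms : #{k ∈ range (n + 1) | imPhantoms n k ≤ 1 - √2 / 2} =
      ⌊(n : ℝ) * (√2 - 1)⌋₊ + 1 := by
    rw [show 1 - √2 / 2 = (√2 - 1) * √2 / 2 by linarith,
      card_filter_imPhantoms_le hn (by linarith) (by nlinarith)]
  have hstrict := card_filter_imPhantoms_lt_le (n := n) (1 - √2 / 2)
  apply phantomMedian_eq_of_card_filter
  · rw [card_filter_imProfile j (· < 1 - √2 / 2)]
    simp only [hj, ↓reduceIte, show (0 : ℝ) < 1 - √2 / 2 by linarith, imDivision,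
      lt_self_iff_false, add_zero]
    omega
  · rw [card_filter_imProfile j (· ≤ 1 - √2 / 2)]
    simp only [hj, ↓reduceIte, show (0 : ℝ) ≤ 1 - √2 / 2 by linarith, imDivision, le_refl]
    omega

theorem phantomMedian_imProfile {n : ℕ} (hn : n ≠ 0) (j : Fin 3) :
    phantomMedian (imProfile n) (imPhantoms n) j = imDivision j := by
  rw [imDivision]
  split_ifs with hj
  · exact phantomMedian_imProfile_of_eq_zero hn hj
  · exact phantomMedian_imProfile_of_ne_zero hn hj

/-- For `n ≥ 2`, the Independent Markets mechanism outputs exactly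
`x = (√2 - 1, 1 - √2/2, 1 - √2/2)` on the profile `imProfile n`; a feasible phantom
parameter is `t* = √2/(2n)`. -/
theorem independent_markets_output (n : ℕ) (hn : 2 ≤ n) :
    ((∑ j, phantomMedian (imProfile n)
        (fun k => min ((k : ℝ) * (Real.sqrt 2 / (2 * (n : ℝ)))) 1) j) = 1 ∧
      ∀ j, phantomMedian (imProfile n)
          (fun k => min ((k : ℝ) * (Real.sqrt 2 / (2 * (n : ℝ)))) 1) j
        = (if (j : ℕ) = 0 then Real.sqrt 2 - 1 else 1 - Real.sqrt 2 / 2)) ∧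
    ∀ w : Fin 3 → ℝ, IsIMOutcome (imProfile n) w →
      ∀ j, w j = (if (j : ℕ) = 0 then Real.sqrt 2 - 1 else 1 - Real.sqrt 2 / 2) := by
  have hmedian : ∀ j, phantomMedian (imProfile n) (imPhantoms n) j = imDivision j :=
    phantomMedian_imProfile (by omega)
  have hsum : ∑ j, phantomMedian (imProfile n) (imPhantoms n) j = 1 := by
    simp only [hmedian, sum_imDivision]
  exact ⟨⟨hsum, hmedian⟩, fun w hw j => (hw.eq_phantomMedian hsum j).trans (hmedian j)⟩
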